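/- arXiv:2411.07158 — 2 statements merged into one kernel-verified Lean document; each statement's English description precedes it below -/
import Mathlib

section
/- Let U be an irreducible AUD transition matrix on a finite or infinite rooted locally finite tree T, and let π be its h-invariant measure. Then for every node u ≠ ∅, π(u) · U(u, p(u)) = ∑_{v ∈ [[∅,p(u)]]} π(v) · U(v, T_u), where U(v, T_u) = ∑_{w ∈ T_u} U(v, w). -/
open scoped BigOperators ENNReal

/-- Nodes of trees are finite words over `ℕ`; the root is the empty word. -/
abbrev Word : Type := List ℕ

/-- The parent of a node: the word with its last letter removed. -/
def par (u : Word) : Word := u.dropLast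

/-- A rooted locally finite tree: a set of words containing the root, closed
under prefixes, in which every node has finitely many children. -/
def IsTree (T : Set Word) : Prop :=
  ([] : Word) ∈ T ∧
  (∀ u ∈ T, ∀ v : Word, v <+: u → v ∈ T) ∧
  (∀ u ∈ T, {i : ℕ | u ++ [i] ∈ T}.Finite)

/-- `desc T u` is the set of descendants of `u` in `T` (the subtree `T_u`). -/
def desc (T : Set Word) (u : Word) : Set Word := {w | w ∈ T ∧ u <+: w}

/-- The children of `u` in `T`. -/
def children (T : Set Word) (u : Word) : Set Word := {v | v ∈ T ∧ ∃ i : ℕ, v = u ++ [i]}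

/-- A transition matrix on `T`: nonnegative entries, rows summing to 1 over `T`. -/
def IsTransMatrix (T : Set Word) (U : Word → Word → ℝ) : Prop :=
  (∀ u ∈ T, ∀ v ∈ T, 0 ≤ U u v) ∧ ∀ u ∈ T, HasSum (fun v : T => U u (v : Word)) 1

/-- Almost upper-directed: positive transitions go to the parent or to a descendant. -/
def IsAUD (T : Set Word) (U : Word → Word → ℝ) : Prop :=
  ∀ u ∈ T, ∀ v ∈ T, 0 < U u v → v = par u ∨ v ∈ desc T u

/-- Almost lower-directed: positive transitions go to a child or to an ancestor. -/
def IsALD (T : Set Word) (D : Word → Word → ℝ) : Prop :=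
  ∀ u ∈ T, ∀ v ∈ T, 0 < D u v → v ∈ children T u ∨ v <+: u

/-- Random-walk transition matrix: positive transitions go to `u`, its parent or a child. -/
def IsRW (T : Set Word) (M : Word → Word → ℝ) : Prop :=
  ∀ u ∈ T, ∀ v ∈ T, 0 < M u v → v = u ∨ v = par u ∨ v ∈ children T u

/-- Irreducibility: any node can be reached from any other by positive transitions. -/
def IrreducibleOn (T : Set Word) (U : Word → Word → ℝ) : Prop :=
  ∀ u ∈ T, ∀ v ∈ T, ∃ (n : ℕ) (x : ℕ → Word),
    x 0 = u ∧ x n = v ∧ (∀ k ≤ n, x k ∈ T) ∧ ∀ k < n, 0 < U (x k) (x (k + 1))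

/-- The weight of a path (a list of nodes): product of the transitions along it. -/
def wgt (U : Word → Word → ℝ) : List Word → ℝ
  | x :: y :: rest => U x y * wgt U (y :: rest)
  | _ => 1

/-- A first-return loop at the root. -/
def IsLoop (T : Set Word) (γ : List Word) : Prop :=
  2 ≤ γ.length ∧ γ.head? = some ([] : Word) ∧ γ.getLast? = some ([] : Word) ∧
  (∀ x ∈ γ, x ∈ T) ∧
  ∀ k, 0 < k → k < γ.length - 1 → γ.getD k [] ≠ ([] : Word)

/-- The total weight of first-return loops at the root. -/
noncomputable def loopSum (T : Set Word) (U : Word → Word → ℝ) : ℝ :=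
  ∑' γ : {γ : List Word // IsLoop T γ}, wgt U γ.1

/-- Recurrence: the total weight of first-return loops at the root is 1. -/
def Recurrent (T : Set Word) (U : Word → Word → ℝ) : Prop := loopSum T U = 1

/-- Expected return time to the root. -/
noncomputable def returnTime (T : Set Word) (U : Word → Word → ℝ) : ℝ≥0∞ :=
  ∑' γ : {γ : List Word // IsLoop T γ},
    ((γ.1.length - 1 : ℕ) : ℝ≥0∞) * ENNReal.ofReal (wgt U γ.1)

/-- Positive recurrence: recurrent with finite expected return time. -/
def PosRecurrent (T : Set Word) (U : Word → Word → ℝ) : Prop :=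
  Recurrent T U ∧ returnTime T U < ⊤

/-- `descWeight T U a b = U(a, T_b)`, the total weight from `a` into the subtree `T_b`. -/
noncomputable def descWeight (T : Set Word) (U : Word → Word → ℝ) (a b : Word) : ℝ :=
  ∑' w : desc T b, U a (w : Word)

/-- The matrix `(Id - ᵘU)^{(u)}`: rows/columns indexed by the strict prefixes of `u`
(the prefix of length `i` corresponds to the index `i`), the column of `u` removed. -/
noncomputable def hMat (T : Set Word) (U : Word → Word → ℝ) (u : Word) :
    Matrix (Fin u.length) (Fin u.length) ℝ :=
  Matrix.of fun i j =>
    (if i = j then 1 else 0) -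
      (if (i : ℕ) ≤ (j : ℕ) + 1 then
        descWeight T U (u.take i) (u.take j) - descWeight T U (u.take i) (u.take ((j : ℕ) + 1))
       else 0)

/-- The h-invariant measure `π` of an AUD transition matrix, with `π(∅) = 1`:
`π(u) = det((Id - ᵘU)^{(u)}) / ∏_{∅ ≠ v ⪯ u} U(v, p(v))`. -/
noncomputable def hInv (T : Set Word) (U : Word → Word → ℝ) (u : Word) : ℝ :=
  (hMat T U u).det / ∏ k ∈ Finset.range u.length, U (u.take (k + 1)) (u.take k)

/-- Paths from `i` to the root whose interior stays away from the root and below height `b`. -/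
def IsEscape (T : Set Word) (i : Word) (b : ℕ) (γ : List Word) : Prop :=
  2 ≤ γ.length ∧ γ.head? = some i ∧ γ.getLast? = some ([] : Word) ∧
  (∀ x ∈ γ, x ∈ T) ∧
  ∀ k, 0 < k → k < γ.length - 1 → γ.getD k [] ≠ ([] : Word) ∧ (γ.getD k []).length < b

/-- `qval T U i b`: total weight of paths from `i` to the root staying away from the
root and below height `b` in their interior. -/
noncomputable def qval (T : Set Word) (U : Word → Word → ℝ) (i : Word) (b : ℕ) : ℝ :=
  ∑' γ : {γ : List Word // IsEscape T i b γ}, wgt U γ.1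

/-- An end of a tree: an infinite injective path starting at the root. -/
def IsEnd (T : Set Word) (p : ℕ → Word) : Prop :=
  p 0 = [] ∧ ∀ k, p (k + 1) ∈ children T (p k)

/-- `T^𝕡`: the nodes of the end `𝕡` together with the finite subtrees hanging from
its neighbors. -/
def endTree (T : Set Word) (p : ℕ → Word) : Set Word :=
  Set.range p ∪
    {v | v ∈ T ∧ ∃ w ∈ T, w <+: v ∧ w ∉ Set.range p ∧ par w ∈ Set.range p ∧ (desc T w).Finite}

/-- `projTo T p w v`: the projection `℘_𝕡` sends `w` to `v` (fixing `T^𝕡`, and sending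
any other node to its highest ancestor on `𝕡`). -/
def projTo (T : Set Word) (p : ℕ → Word) (w v : Word) : Prop :=
  (w ∈ endTree T p ∧ v = w) ∨
  (w ∉ endTree T p ∧ v ∈ Set.range p ∧ v <+: w ∧
    ∀ v' ∈ Set.range p, v' <+: w → v' <+: v)

/-- The projected transition matrix `U^𝕡` on `T^𝕡`. -/
noncomputable def projMat (T : Set Word) (p : ℕ → Word) (U : Word → Word → ℝ)
    (u v : Word) : ℝ :=
  ∑' w : {w : Word // w ∈ T ∧ projTo T p w v}, U u (w : Word)

/-- Longest common prefix of two words. -/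
def lcp : Word → Word → Word
  | a :: as, b :: bs => if a = b then a :: lcp as bs else []
  | _, _ => []

/-- Graph distance on the tree. -/
def treeDist (u v : Word) : ℕ :=
  (u.length - (lcp u v).length) + (v.length - (lcp u v).length)

/-- A first-return path from `w` to the set `B`. -/
def IsReturnPath (T : Set Word) (B : Set Word) (w : Word) (γ : List Word) : Prop :=
  2 ≤ γ.length ∧ γ.head? = some w ∧ (∀ x ∈ γ, x ∈ T) ∧
  (∀ k, 0 < k → k < γ.length - 1 → γ.getD k [] ∉ B) ∧
  ∃ z ∈ B, γ.getLast? = some z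

open Classical in
/-- `expReturn T U B w`: the expected first-return time from `w` to `B`, set to `∞`
when return to `B` is not almost sure. -/
noncomputable def expReturn (T : Set Word) (U : Word → Word → ℝ) (B : Set Word)
    (w : Word) : ℝ≥0∞ :=
  if (∑' γ : {γ : List Word // IsReturnPath T B w γ}, wgt U γ.1) = 1 then
    ∑' γ : {γ : List Word // IsReturnPath T B w γ},
      ((γ.1.length - 1 : ℕ) : ℝ≥0∞) * ENNReal.ofReal (wgt U γ.1)
  else ⊤

/-- `P(T)`: nodes with infinitely many descendants (union of the ends of `T`). -/
def Ptree (T : Set Word) : Set Word := {u | u ∈ T ∧ (desc T u).Infinite}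

/-- `Q(T) = 1 + ∑_{u ∈ P(T)} (|c_{P(T)}(u)| - 1)`, valued in `ℝ≥0∞`. -/
noncomputable def Qval (T : Set Word) : ℝ≥0∞ :=
  1 + ∑' u : Ptree T, (((children (Ptree T) (u : Word)).ncard - 1 : ℕ) : ℝ≥0∞)

/-- Complex version of `hMat`, with `λ` on the diagonal: `(λ·Id - ᵘU)^{(u)}`. -/
noncomputable def hMatC (T : Set Word) (U : Word → Word → ℝ) (lam : ℂ) (u : Word) :
    Matrix (Fin u.length) (Fin u.length) ℂ :=
  Matrix.of fun i j =>
    (if i = j then lam else 0) -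
      (if (i : ℕ) ≤ (j : ℕ) + 1 then
        ((descWeight T U (u.take i) (u.take j) : ℝ) : ℂ) -
          ((descWeight T U (u.take i) (u.take ((j : ℕ) + 1)) : ℝ) : ℂ)
       else 0)

/-- `π^{(λ)}(u) = det((λ·Id - ᵘU)^{(u)}) / ∏_{∅ ≠ v ⪯ u} U(v, p(v))`. -/
noncomputable def piLam (T : Set Word) (U : Word → Word → ℝ) (lam : ℂ) (u : Word) : ℂ :=
  (hMatC T U lam u).det /
    ∏ k ∈ Finset.range u.length, ((U (u.take (k + 1)) (u.take k) : ℝ) : ℂ)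

/-- The measure `π̄` of a random walk: `π̄(u) = ∏_j M(u[j-1],u[j]) / M(u[j],u[j-1])`. -/
noncomputable def rwInv (M : Word → Word → ℝ) (u : Word) : ℝ :=
  ∏ k ∈ Finset.range u.length, (M (u.take k) (u.take (k + 1)) / M (u.take (k + 1)) (u.take k))

/-!
Write `uᵢ` for the ancestor of `u` at height `i`. Right-multiplying `(Id - ᵘU)^{(u)}` by the
upper-triangular all-ones matrix replaces each column by the sum of the columns up to it; the
entries telescope, and the AUD row identities `U(v, T_{p(v)}) = 1` and
`U(v, p(v)) + U(v, T_v) = 1` turn the product into an upper Hessenberg matrix `Hₙ` with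
subdiagonal `-U(u_{j+1}, u_j)` and entry `U(uᵢ, T_{u_{j+1}})` at `(i, j)`, `i ≤ j`. Its leading
principal minors are the matrices of the ancestors of `u`, and expanding along the last row gives
`det H_{n+1} = ∑ₖ U(uₖ, T_u) det Hₖ ∏_{k ≤ j < n} U(u_{j+1}, u_j)`. Dividing by
`∏_{j ≤ n} U(u_{j+1}, u_j)`, which is nonzero because irreducibility forces every step towards
the root to have positive probability, gives the balance equation.
-/

namespace IsTree

variable {T : Set Word}

lemma take_mem (hT : IsTree T) {u : Word} (hu : u ∈ T) (k : ℕ) : u.take k ∈ T :=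
  hT.2.1 u hu _ (List.take_prefix k u)

lemma par_mem (hT : IsTree T) {u : Word} (hu : u ∈ T) : par u ∈ T :=
  hT.2.1 u hu _ (List.dropLast_prefix u)

end IsTree

lemma par_take {u : Word} {i : ℕ} (hi : i ≤ u.length) : par (u.take i) = u.take (i - 1) := by
  rw [par, List.dropLast_eq_take, List.length_take, List.take_take, min_eq_left hi,
    min_eq_left (Nat.sub_le i 1)]

lemma take_succ_ne_nil {u : Word} {k : ℕ} (hk : k < u.length) : u.take (k + 1) ≠ [] := by
  rw [Ne, List.take_eq_nil_iff]
  rintro (h | rfl)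
  exacts [Nat.succ_ne_zero k h, Nat.not_lt_zero k hk]

lemma eq_of_prefix_of_not_prefix_par {v x : Word} (hvx : v <+: x) (hpar : ¬ v <+: par x) :
    x = v := by
  refine (hvx.eq_of_length_le ?_).symm
  by_contra! hlt
  exact hpar (List.prefix_of_prefix_length_le hvx (List.dropLast_prefix x)
    (by rw [par, List.length_dropLast]; omega))

lemma par_notMem_desc {T : Set Word} {v : Word} (hv : v ≠ []) : par v ∉ desc T v := by
  rintro ⟨-, hpre⟩
  have := hpre.length_le
  rw [par, List.length_dropLast] at this
  have := List.length_pos_iff.mpr hv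
  omega

lemma desc_subset_desc_par {T : Set Word} (v : Word) : desc T v ⊆ desc T (par v) :=
  fun _ hw => ⟨hw.1, (List.dropLast_prefix v).trans hw.2⟩

lemma exists_mem_and_succ_notMem {α : Type*} {S : Set α} (x : ℕ → α) {n : ℕ}
    (h0 : x 0 ∈ S) (hn : x n ∉ S) : ∃ k < n, x k ∈ S ∧ x (k + 1) ∉ S := by
  induction n with
  | zero => exact absurd h0 hn
  | succ n ih =>
    by_cases hxn : x n ∈ S
    · exact ⟨n, n.lt_succ_self, hxn, hn⟩
    · obtain ⟨k, hk, hmem⟩ := ih hxn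
      exact ⟨k, hk.trans n.lt_succ_self, hmem⟩

section TransitionMatrix

variable {T : Set Word} {U : Word → Word → ℝ}

lemma IsTransMatrix.hasSum_of_forall_notMem (hM : IsTransMatrix T U) {a : Word} (ha : a ∈ T)
    {s : Set Word} (hsT : s ⊆ T) (hs : ∀ w ∈ T, w ∉ s → U a w = 0) :
    HasSum (fun w : s => U a w) 1 := by
  have hind : s.indicator (U a) = T.indicator (U a) := by
    funext w
    by_cases hw : w ∈ s
    · simp [hw, hsT hw]
    · by_cases hwT : w ∈ T
      · simp [hw, hwT, hs w hwT hw]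
      · simp [hw, hwT]
  refine (hasSum_subtype_iff_indicator (f := U a)).mpr ?_
  rw [hind]
  exact hasSum_subtype_iff_indicator.mp (hM.2 a ha)

lemma IsTransMatrix.summable_desc (hM : IsTransMatrix T U) {a : Word} (ha : a ∈ T) (b : Word) :
    Summable (fun w : desc T b => U a w) := by
  have h := (hasSum_subtype_iff_indicator.mp (hM.2 a ha)).summable.subtype (desc T b)
  refine h.congr fun w => ?_
  simp [w.2.1]

lemma IsAUD.apply_eq_zero (hA : IsAUD T U) (hM : IsTransMatrix T U) {v w : Word}
    (hv : v ∈ T) (hw : w ∈ T) (hpar : w ≠ par v) (hdesc : w ∉ desc T v) : U v w = 0 :=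
  le_antisymm (not_lt.mp fun hpos => (hA v hv w hw hpos).elim hpar hdesc) (hM.1 v hv w hw)

lemma IsAUD.descWeight_par (hA : IsAUD T U) (hT : IsTree T) (hM : IsTransMatrix T U)
    {v : Word} (hv : v ∈ T) : descWeight T U v (par v) = 1 := by
  refine (hM.hasSum_of_forall_notMem hv (fun _ hw => hw.1) fun w hw hnot => ?_).tsum_eq
  refine hA.apply_eq_zero hM hv hw ?_ fun hd => hnot (desc_subset_desc_par v hd)
  rintro rfl
  exact hnot ⟨hT.par_mem hv, List.prefix_refl _⟩

lemma IsAUD.apply_par_add_descWeight_self (hA : IsAUD T U) (hT : IsTree T)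
    (hM : IsTransMatrix T U) {v : Word} (hv : v ∈ T) (hv0 : v ≠ []) :
    U v (par v) + descWeight T U v v = 1 := by
  have hdisj : Disjoint {par v} (desc T v) :=
    Set.disjoint_singleton_left.mpr (par_notMem_desc hv0)
  have hsum := (hasSum_singleton (par v) (U v)).add_disjoint hdisj
    (hM.summable_desc hv v).hasSum
  refine hsum.unique (hM.hasSum_of_forall_notMem hv ?_ fun w hw hnot => ?_)
  · rintro w (rfl | hw)
    exacts [hT.par_mem hv, hw.1]
  · exact hA.apply_eq_zero hM hv hw (fun h => hnot (Or.inl h)) fun h => hnot (Or.inr h)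

lemma IsAUD.apply_par_pos (hA : IsAUD T U) (hI : IrreducibleOn T U) (hT : IsTree T)
    {v : Word} (hv : v ∈ T) (hv0 : v ≠ []) : 0 < U v (par v) := by
  obtain ⟨n, x, hx0, hxn, hxT, hpos⟩ := hI v hv [] hT.1
  have hout : x n ∉ desc T v := fun h => hv0 (List.prefix_nil.mp (hxn ▸ h.2))
  obtain ⟨k, hk, hin, hnext⟩ :=
    exists_mem_and_succ_notMem x (by rw [hx0]; exact ⟨hv, List.prefix_refl v⟩) hout
  have hstep := hpos k hk
  have hnextT := hxT (k + 1) hk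
  rcases hA (x k) (hxT k hk.le) (x (k + 1)) hnextT hstep with hpar | hdesc
  · have hxk : x k = v :=
      eq_of_prefix_of_not_prefix_par hin.2 fun h => hnext ⟨hnextT, hpar ▸ h⟩
    rwa [hpar, hxk] at hstep
  · exact absurd ⟨hnextT, hin.2.trans hdesc.2⟩ hnext

end TransitionMatrix

section Hessenberg

open Finset

variable {R : Type*} [CommRing R]

def hessenberg (c : ℕ → R) (g : ℕ → ℕ → R) (m : ℕ) : Matrix (Fin m) (Fin m) R :=
  Matrix.of fun i j =>
    if (j : ℕ) + 1 < i then 0 else if (j : ℕ) + 1 = i then -c j else g i (j + 1)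

lemma hessenberg_congr {c c' : ℕ → R} {g g' : ℕ → ℕ → R} {m : ℕ} (hc : ∀ j < m, c j = c' j)
    (hg : ∀ i < m, ∀ j ≤ m, g i j = g' i j) : hessenberg c g m = hessenberg c' g' m := by
  ext i j
  simp only [hessenberg, Matrix.of_apply, hc j j.isLt, hg i i.isLt (j + 1) j.isLt]

lemma hessenberg_castSucc (c : ℕ → R) (g : ℕ → ℕ → R) (m : ℕ) (i j : Fin m) :
    hessenberg c g (m + 1) i.castSucc j.castSucc = hessenberg c g m i j := rfl

lemma det_updateCol_last_hessenberg (c : ℕ → R) (g : ℕ → ℕ → R) (m : ℕ) (φ : ℕ → R) :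
    ((hessenberg c g (m + 1)).updateCol (Fin.last m) (fun i => φ i)).det =
      ∑ k ∈ range (m + 1), φ k * (hessenberg c g k).det * ∏ j ∈ Ico k m, c j := by
  induction m generalizing φ with
  | zero => simp
  | succ m ih =>
    set M := (hessenberg c g (m + 2)).updateCol (Fin.last (m + 1)) (fun i => φ i)
    have hrow : ∀ j : Fin m, M (Fin.last (m + 1)) j.castSucc.castSucc = 0 := fun j => by
      have := j.isLt
      simp [M, Matrix.updateCol_apply, hessenberg, Fin.ext_iff]
      omega
    have hminor_last : M.submatrix (Fin.last (m + 1)).succAbove (Fin.last (m + 1)).succAbove =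
        hessenberg c g (m + 1) := by
      ext i j
      simp [M, (Fin.castSucc_lt_last j).ne, hessenberg_castSucc]
    have hminor_pred : M.submatrix (Fin.last (m + 1)).succAbove (Fin.last m).castSucc.succAbove =
        (hessenberg c g (m + 1)).updateCol (Fin.last m) (fun i => φ i) := by
      ext i j
      refine Fin.lastCases ?_ (fun j => ?_) j
      · simp [M]
      · simp [M, Fin.succAbove_castSucc_of_lt _ _ (Fin.castSucc_lt_last j),
          (Fin.castSucc_lt_last j).ne, (Fin.castSucc_lt_last j.castSucc).ne, hessenberg_castSucc]
    rw [Matrix.det_succ_row M (Fin.last (m + 1)), Fin.sum_univ_castSucc, Fin.sum_univ_castSucc]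
    simp only [hrow, mul_zero, zero_mul, sum_const_zero, zero_add, hminor_last, hminor_pred, ih]
    have hsub : M (Fin.last (m + 1)) (Fin.last m).castSucc = -c m := by
      simp [M, hessenberg]
    have hdiag : M (Fin.last (m + 1)) (Fin.last (m + 1)) = φ (m + 1) := by simp [M]
    have hsum : ∑ k ∈ range (m + 1), φ k * (hessenberg c g k).det * ∏ j ∈ Ico k (m + 1), c j =
        c m * ∑ k ∈ range (m + 1), φ k * (hessenberg c g k).det * ∏ j ∈ Ico k m, c j := by
      rw [mul_sum]
      refine sum_congr rfl fun k hk => ?_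
      rw [prod_Ico_succ_top (Nat.lt_succ_iff.mp (mem_range.mp hk))]
      ring
    rw [hsub, hdiag, Fin.val_last, Fin.val_castSucc, Fin.val_last, sum_range_succ _ (m + 1), hsum,
      Odd.neg_one_pow ⟨m, by ring⟩, Even.neg_one_pow ⟨m + 1, by ring⟩, Ico_self, prod_empty]
    ring

lemma det_hessenberg_succ (c : ℕ → R) (g : ℕ → ℕ → R) (m : ℕ) :
    (hessenberg c g (m + 1)).det =
      ∑ k ∈ range (m + 1), g k (m + 1) * (hessenberg c g k).det * ∏ j ∈ Ico k m, c j := by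
  rw [← det_updateCol_last_hessenberg]
  congr
  ext i j
  rw [Matrix.updateCol_apply]
  split_ifs with hj
  · subst hj
    simp [hessenberg, i.isLt.not_gt, i.isLt.ne']
  · rfl

lemma det_hessenberg_div_prod_mul {K : Type*} [Field K] (c : ℕ → K) (g : ℕ → ℕ → K) (m : ℕ)
    (hc : ∀ j ≤ m, c j ≠ 0) :
    (hessenberg c g (m + 1)).det / (∏ j ∈ range (m + 1), c j) * c m =
      ∑ k ∈ range (m + 1), (hessenberg c g k).det / (∏ j ∈ range k, c j) * g k (m + 1) := by
  rw [det_hessenberg_succ, prod_range_succ, sum_div, sum_mul]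
  refine sum_congr rfl fun k hk => ?_
  have hkm : k ≤ m := Nat.lt_succ_iff.mp (mem_range.mp hk)
  have hrange : ∏ j ∈ range k, c j ≠ 0 :=
    prod_ne_zero_iff.mpr fun j hj => hc j (by have := mem_range.mp hj; omega)
  have hIco : ∏ j ∈ Ico k m, c j ≠ 0 :=
    prod_ne_zero_iff.mpr fun j hj => hc j (mem_Ico.mp hj).2.le
  rw [← prod_range_mul_prod_Ico c hkm]
  field_simp [hc m le_rfl]

end Hessenberg

section UpperOnes

open Finset

variable {R : Type*} [CommRing R]

def upperOnes (m : ℕ) : Matrix (Fin m) (Fin m) R :=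
  Matrix.of fun i j => if i ≤ j then 1 else 0

lemma det_upperOnes (m : ℕ) : (upperOnes m : Matrix (Fin m) (Fin m) R).det = 1 := by
  rw [Matrix.det_of_isUpperTriangular]
  · simp [upperOnes]
  · intro i j hij
    simp only [upperOnes, Matrix.of_apply, id] at hij ⊢
    rw [if_neg (not_le.mpr hij)]

lemma mul_upperOnes_apply {m : ℕ} (A : Matrix (Fin m) (Fin m) R) (f : ℕ → R) (i j : Fin m)
    (hA : ∀ k, A i k = f k) :
    (A * upperOnes m : Matrix (Fin m) (Fin m) R) i j = ∑ k ∈ range (j + 1), f k := by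
  simp only [Matrix.mul_apply, hA, upperOnes, Matrix.of_apply, mul_ite, mul_one, mul_zero,
    Fin.le_def]
  rw [Fin.sum_univ_eq_sum_range (fun k => if k ≤ (j : ℕ) then f k else 0), ← sum_filter]
  congr 1
  ext k
  simp only [mem_filter, mem_range]
  omega

end UpperOnes

lemma sum_range_ite_eq_sub_telescope {R : Type*} [CommRing R] (F : ℕ → R) (i j : ℕ) :
    ∑ k ∈ Finset.range (j + 1),
        ((if i = k then 1 else 0) - if i ≤ k + 1 then F k - F (k + 1) else 0) =
      (if i ≤ j then 1 else 0) - if i ≤ j + 1 then F (i - 1) - F (j + 1) else 0 := by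
  induction j with
  | zero =>
    rcases i with _ | _ | i <;> simp
  | succ j ih =>
    rw [Finset.sum_range_succ, ih]
    split_ifs <;> first | omega | ring1 | (rw [show i - 1 = j + 1 by omega]; ring1)

def ancestorUp (U : Word → Word → ℝ) (u : Word) (j : ℕ) : ℝ := U (u.take (j + 1)) (u.take j)

noncomputable def ancestorDescWeight (T : Set Word) (U : Word → Word → ℝ) (u : Word)
    (i j : ℕ) : ℝ :=
  descWeight T U (u.take i) (u.take j)

lemma ancestorUp_take {U : Word → Word → ℝ} {u : Word} {j k : ℕ} (hj : j < k) :
    ancestorUp U (u.take k) j = ancestorUp U u j := by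
  simp only [ancestorUp, List.take_take, min_eq_left (show j + 1 ≤ k from hj), min_eq_left hj.le]

lemma ancestorDescWeight_take {T : Set Word} {U : Word → Word → ℝ} {u : Word} {i j k : ℕ}
    (hi : i ≤ k) (hj : j ≤ k) :
    ancestorDescWeight T U (u.take k) i j = ancestorDescWeight T U u i j := by
  simp only [ancestorDescWeight, List.take_take, min_eq_left hi, min_eq_left hj]

lemma ancestorUp_of_length_eq_succ {U : Word → Word → ℝ} {u : Word} {m : ℕ}
    (hm : u.length = m + 1) : ancestorUp U u m = U u (par u) := by
  have h := par_take (u := u) le_rfl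
  rw [List.take_length, hm, Nat.add_sub_cancel] at h
  rw [h, ancestorUp, ← hm, List.take_length]

section HMat

variable {T : Set Word} {U : Word → Word → ℝ}

lemma hMat_mul_upperOnes (hT : IsTree T) (hM : IsTransMatrix T U) (hA : IsAUD T U) {u : Word}
    (hu : u ∈ T) :
    hMat T U u * upperOnes u.length =
      hessenberg (ancestorUp U u) (ancestorDescWeight T U u) u.length := by
  ext i j
  have hi := i.isLt
  -- for `i = 0` this is `U(∅, T) = 1`, since `0 - 1 = 0` in `ℕ` and `par [] = []`
  have hpar : ancestorDescWeight T U u i (i - 1) = 1 := by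
    rw [ancestorDescWeight, ← par_take hi.le]
    exact hA.descWeight_par hT hM (hT.take_mem hu i)
  rw [mul_upperOnes_apply _ (fun k => (if (i : ℕ) = k then 1 else 0) -
        if i ≤ k + 1 then ancestorDescWeight T U u i k - ancestorDescWeight T U u i (k + 1)
        else 0) i j fun k => by simp [hMat, Fin.ext_iff, ancestorDescWeight],
    sum_range_ite_eq_sub_telescope, hpar]
  simp only [hessenberg, Matrix.of_apply]
  rcases lt_trichotomy ((j : ℕ) + 1) i with hlt | heq | hgt
  · rw [if_pos hlt, if_neg (show ¬ (i : ℕ) ≤ j by omega),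
      if_neg (show ¬ (i : ℕ) ≤ j + 1 by omega), sub_zero]
  · have hup := hA.apply_par_add_descWeight_self hT hM (hT.take_mem hu i)
      (heq ▸ take_succ_ne_nil (by omega))
    rw [par_take hi.le, ← heq, Nat.add_sub_cancel] at hup
    rw [if_neg heq.not_lt, if_pos heq, if_neg (show ¬ (i : ℕ) ≤ j by omega), if_pos heq.ge,
      ancestorUp, ancestorDescWeight, ← heq]
    linarith
  · rw [if_neg hgt.not_gt, if_neg hgt.ne', if_pos (Nat.lt_succ_iff.mp hgt), if_pos hgt.le]
    ring

lemma IsAUD.ancestorUp_pos (hA : IsAUD T U) (hI : IrreducibleOn T U) (hT : IsTree T) {u : Word}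
    (hu : u ∈ T) {j : ℕ} (hj : j < u.length) : 0 < ancestorUp U u j := by
  have hpos := hA.apply_par_pos hI hT (hT.take_mem hu (j + 1)) (take_succ_ne_nil hj)
  rwa [par_take (show j + 1 ≤ u.length from hj), Nat.add_sub_cancel] at hpos

lemma hInv_take (hT : IsTree T) (hM : IsTransMatrix T U) (hA : IsAUD T U) {u : Word}
    (hu : u ∈ T) {k : ℕ} (hk : k ≤ u.length) :
    hInv T U (u.take k) =
      (hessenberg (ancestorUp U u) (ancestorDescWeight T U u) k).det /
        ∏ j ∈ Finset.range k, ancestorUp U u j := by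
  have hdet : (hMat T U (u.take k)).det = (hessenberg (ancestorUp U (u.take k))
      (ancestorDescWeight T U (u.take k)) (u.take k).length).det := by
    rw [← hMat_mul_upperOnes hT hM hA (hT.take_mem hu k), Matrix.det_mul, det_upperOnes, mul_one]
  rw [hInv, hdet, List.length_take_of_le hk,
    hessenberg_congr (fun j hj => ancestorUp_take hj)
      fun i hi j hj => ancestorDescWeight_take hi.le hj]
  exact congrArg _ (Finset.prod_congr rfl fun j hj => ancestorUp_take (Finset.mem_range.mp hj))

end HMat

theorem hInv_balance (T : Set Word) (hT : IsTree T) (U : Word → Word → ℝ)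
    (hM : IsTransMatrix T U) (hA : IsAUD T U) (hI : IrreducibleOn T U) :
    ∀ u ∈ T, u ≠ [] →
      hInv T U u * U u (par u) =
        ∑ k ∈ Finset.range u.length,
          hInv T U (u.take k) * descWeight T U (u.take k) u := by
  intro u hu hu0
  obtain ⟨m, hm⟩ : ∃ m, u.length = m + 1 :=
    Nat.exists_eq_succ_of_ne_zero (List.length_pos_iff.mpr hu0).ne'
  calc hInv T U u * U u (par u)
      = (hessenberg (ancestorUp U u) (ancestorDescWeight T U u) (m + 1)).det /
          (∏ j ∈ Finset.range (m + 1), ancestorUp U u j) * ancestorUp U u m := by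
        rw [ancestorUp_of_length_eq_succ hm, ← hm, ← hInv_take hT hM hA hu le_rfl,
          List.take_length]
    _ = ∑ k ∈ Finset.range (m + 1),
          (hessenberg (ancestorUp U u) (ancestorDescWeight T U u) k).det /
            (∏ j ∈ Finset.range k, ancestorUp U u j) * ancestorDescWeight T U u k (m + 1) :=
        det_hessenberg_div_prod_mul _ _ m fun j hj => (hA.ancestorUp_pos hI hT hu (by omega)).ne'
    _ = _ := by
        rw [hm]
        refine Finset.sum_congr rfl fun k hk => ?_
        rw [hInv_take hT hM hA hu (by rw [hm]; exact (Finset.mem_range.mp hk).le),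
          ancestorDescWeight, ← hm, List.take_length]
end

section
/- Let U be an irreducible AUD transition matrix on an infinite rooted locally finite tree T. Then the set of complex numbers λ that are not left eigenvalues of U, i.e. {λ ∈ ℂ : there is no nonzero L : T → ℂ with ∑_{v∈T} L(v)U(v,u) = λ·L(u) for all u ∈ T}, is countable. -/
open scoped BigOperators ENNReal

/-
Let `P = Ptree T` be the set of nodes with infinitely many descendants: it contains the root and
each of its nodes has a child in `P`, and off `P` the tree consists of finite subtrees `T_b`
hanging from `P`. Let `λ` avoid the spectra of the countably many finite matrices
`(U(j,i))_{i,j ∈ S}`, `S` a finite set of nodes. By AUD the equation at `u` involves only the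
ancestors of `u`, `u` itself and its children, so an eigenvector can be built level by level
from `L(∅) = 1`. On a finite subtree `T_b` the equations form a square system, with source term
coming from the strict ancestors of `b`, which is uniquely solvable by the choice of `λ`. At
`u ∈ P` pick a child `q ∈ P`; irreducibility forces `U(q,u) > 0`, so the equation at `u` can be
solved for `L(q)`, the other children in `P` getting `0`. Each value depends only on values at
shorter words, so the recursion is well founded.
-/

namespace TreeEigen

open Classical Matrix

theorem countable_setOf_exists_isRoot_charpoly {R ι : Type*} [CommRing R] [IsDomain R]
    [Countable ι] {n : ι → Type*} [∀ i, Fintype (n i)] [∀ i, DecidableEq (n i)]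
    (M : ∀ i, Matrix (n i) (n i) R) : {x : R | ∃ i, (M i).charpoly.IsRoot x}.Countable := by
  rw [Set.ofPred_exists]
  exact Set.countable_iUnion fun i =>
    (Polynomial.finite_setOfPred_isRoot (M i).charpoly_monic.ne_zero).countable

theorem scalar_sub_mulVec_inv_mulVec {K n : Type*} [Field K] [Fintype n] [DecidableEq n]
    {M : Matrix n n K} {x : K} (hx : ¬ M.charpoly.IsRoot x) (e : n → K) (i : n) :
    x * ((scalar n x - M)⁻¹ *ᵥ e) i - ∑ j, M i j * ((scalar n x - M)⁻¹ *ᵥ e) j = e i := by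
  have hdet : IsUnit (scalar n x - M).det := by
    rw [isUnit_iff_ne_zero, ← eval_charpoly]
    exact hx
  have hsolve : (scalar n x - M) *ᵥ ((scalar n x - M)⁻¹ *ᵥ e) = e := by
    rw [mulVec_mulVec, mul_nonsing_inv _ hdet, one_mulVec]
  have hi := congrFun hsolve i
  rwa [sub_mulVec, Pi.sub_apply, scalar_apply, mulVec_diagonal] at hi

theorem length_lt_of_prefix {α : Type*} {l₁ l₂ : List α} (h : l₁ <+: l₂) (hne : l₁ ≠ l₂) :
    l₁.length < l₂.length :=
  h.length_le.lt_of_ne fun hlen => hne (h.eq_of_length hlen)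

noncomputable def finsetOf {α : Type*} (s : Set α) : Finset α :=
  if h : s.Finite then h.toFinset else ∅

theorem mem_finsetOf {α : Type*} {s : Set α} (h : s.Finite) {a : α} :
    a ∈ finsetOf s ↔ a ∈ s := by
  rw [finsetOf, dif_pos h, Set.Finite.mem_toFinset]

theorem mem_of_mem_finsetOf {α : Type*} {s : Set α} {a : α} (ha : a ∈ finsetOf s) : a ∈ s := by
  unfold finsetOf at ha
  split_ifs at ha with h
  · exact h.mem_toFinset.1 ha
  · simp at ha

theorem tsum_subtype_eq_sum {α M : Type*} [AddCommMonoid M] [TopologicalSpace M] {T : Set α}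
    {F : α → M} (s : Finset α) (hs : ∀ v ∈ s, v ∈ T) (hF : ∀ v ∈ T, v ∉ s → F v = 0) :
    ∑' v : T, F v = ∑ v ∈ s, F v := by
  rw [tsum_subtype, tsum_eq_sum fun v hv => Set.indicator_apply_eq_zero.2 fun hvT => hF v hvT hv]
  exact Finset.sum_congr rfl fun v hv => Set.indicator_of_mem (hs v hv) F

section Tree

variable {T : Set Word} {U : Word → Word → ℝ} {u v c : Word}

theorem par_of_mem_children (hc : c ∈ children T u) : par c = u := by
  obtain ⟨-, i, rfl⟩ := hc
  exact List.dropLast_concat ..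

theorem length_of_mem_children (hc : c ∈ children T u) : c.length = u.length + 1 := by
  obtain ⟨-, i, rfl⟩ := hc
  simp

theorem ne_nil_of_mem_children (hc : c ∈ children T u) : c ≠ [] := by
  obtain ⟨-, i, rfl⟩ := hc
  simp

theorem prefix_par_of_prefix (h : v <+: u) (hne : v ≠ u) : v <+: par u := by
  obtain ⟨t, rfl⟩ := h
  obtain ⟨t, i, rfl⟩ := List.eq_nil_or_concat t |>.resolve_left (by rintro rfl; simp at hne)
  simp [par, ← List.append_assoc]

theorem children_finite (hT : IsTree T) (hu : u ∈ T) : (children T u).Finite := by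
  refine ((hT.2.2 u hu).image (fun i => u ++ [i])).subset ?_
  rintro c ⟨hcT, i, rfl⟩
  exact Set.mem_image_of_mem _ hcT

theorem nil_mem_Ptree (hT : IsTree T) (hinf : T.Infinite) : [] ∈ Ptree T :=
  ⟨hT.1, hinf.mono fun _ hw => ⟨hw, List.nil_prefix⟩⟩

theorem desc_subset_biUnion_children (hT : IsTree T) :
    desc T u ⊆ {u} ∪ ⋃ c ∈ children T u, desc T c := by
  rintro w ⟨hw, ⟨t, rfl⟩⟩
  cases t with
  | nil => simp
  | cons i t =>
    have hc : u ++ [i] ∈ children T u :=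
      ⟨hT.2.1 _ hw _ ⟨t, by simp⟩, i, rfl⟩
    exact Or.inr (Set.mem_biUnion hc ⟨hw, ⟨t, by simp⟩⟩)

theorem exists_mem_children_mem_Ptree (hT : IsTree T) (hu : u ∈ Ptree T) :
    ∃ c ∈ children T u, c ∈ Ptree T := by
  by_contra! hfin
  refine hu.2 (((Set.finite_singleton u).union ((children_finite hT hu.1).biUnion
    fun c hc => ?_)).subset (desc_subset_biUnion_children hT))
  by_contra hinf
  exact hfin c hc ⟨hc.1, hinf⟩

/-- Leaving the subtree `T_c` is only possible through the step from `c` to its parent. -/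
theorem apply_par_pos (hA : IsAUD T U) (hI : IrreducibleOn T U) (h0 : [] ∈ T) (hc : c ∈ T)
    (hc0 : c ≠ []) : 0 < U c (par c) := by
  obtain ⟨n, x, hx0, hxn, hxT, hpos⟩ := hI c hc [] h0
  have hexit : ∃ k, ¬ c <+: x k := ⟨n, by rwa [hxn, List.prefix_nil]⟩
  obtain ⟨j, hj⟩ : ∃ j, Nat.find hexit = j + 1 :=
    Nat.exists_eq_succ_of_ne_zero fun h => Nat.find_spec hexit (by rw [h, hx0])
  have hjn : j < n := by
    have := Nat.find_min' hexit (show ¬ c <+: x n by rwa [hxn, List.prefix_nil])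
    omega
  have hcj : c <+: x j := not_not.1 (Nat.find_min hexit (by omega))
  have hexit' : ¬ c <+: x (j + 1) := hj ▸ Nat.find_spec hexit
  have hstep := hpos j hjn
  rcases hA _ (hxT j hjn.le) _ (hxT _ hjn) hstep with hpar | hdesc
  · have hxj : x j = c := by
      by_contra hne
      exact hexit' (hpar ▸ prefix_par_of_prefix hcj (Ne.symm hne))
    rwa [hpar, hxj] at hstep
  · exact absurd (hcj.trans hdesc.2) hexit'

theorem prefix_or_mem_children_of_ne_zero (hU0 : ∀ u ∈ T, ∀ v ∈ T, 0 ≤ U u v)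
    (hA : IsAUD T U) (hv : v ∈ T) (hu : u ∈ T) (h : U v u ≠ 0) :
    v <+: u ∨ v ∈ children T u := by
  rcases hA v hv u hu ((hU0 v hv u hu).lt_of_ne' h) with rfl | hdesc
  · rcases List.eq_nil_or_concat v with rfl | ⟨w, i, rfl⟩
    · exact Or.inl List.nil_prefix
    · exact Or.inr ⟨hv, i, by simp [par]⟩
  · exact Or.inl hdesc.2

theorem prefix_ne_or_mem_desc {b : Word} (hbu : b <+: u) (hv : v ∈ T)
    (h : v <+: u ∨ v ∈ children T u) : (v <+: b ∧ v ≠ b) ∨ v ∈ desc T b := by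
  rcases h with hvu | ⟨-, i, rfl⟩
  · by_cases hbv : b <+: v
    · exact Or.inr ⟨hv, hbv⟩
    · refine Or.inl ⟨(List.prefix_or_prefix_of_prefix hvu hbu).resolve_right hbv, ?_⟩
      rintro rfl
      exact hbv List.prefix_rfl
  · exact Or.inr ⟨hv, hbu.trans (List.prefix_append _ _)⟩

end Tree

section Construction

variable (T : Set Word) (U : Word → Word → ℝ) (lam : ℂ)

def transposedBlock (S : Finset Word) : Matrix S S ℂ := Matrix.of fun i j => (U j i : ℂ)

/-- The root of the finite subtree hanging off `Ptree T` that contains `v`. -/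
noncomputable def bushRoot (v : Word) : Word :=
  if h : ∃ k, v.take k ∉ Ptree T then v.take (Nat.find h) else []

/-- On the finite subtree `T_b`, solve the eigenvalue equation with the contributions of the
strict ancestors of `b` (given by `f`) as source term. -/
noncomputable def bushSol (f : Word → ℂ) (b w : Word) : ℂ :=
  if hw : w ∈ finsetOf (desc T b) then
    ((scalar (finsetOf (desc T b)) lam - transposedBlock U (finsetOf (desc T b)))⁻¹ *ᵥ
      fun i => ∑ a ∈ b.inits.toFinset.erase b, f a * U a i) ⟨w, hw⟩
  else 0

noncomputable def pivot (u : Word) : Word :=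
  if h : ∃ c ∈ children T u, c ∈ Ptree T then h.choose else u

noncomputable def offPivotVal (f : Word → ℂ) (v : Word) : ℂ :=
  if v ∈ Ptree T then 0 else bushSol T U lam f (bushRoot T v) v

/-- The value at `pivot T u` that makes the eigenvalue equation at `u` hold. -/
noncomputable def pivotVal (f : Word → ℂ) (u : Word) : ℂ :=
  (lam * f u - ∑ a ∈ u.inits.toFinset, f a * U a u -
    ∑ c ∈ (finsetOf (children T u)).erase (pivot T u), offPivotVal T U lam f c * U c u) /
      U (pivot T u) u

noncomputable def forcedVal (f : Word → ℂ) (v : Word) : ℂ :=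
  if v ∈ Ptree T ∧ v = pivot T (par v) then pivotVal T U lam f (par v)
  else offPivotVal T U lam f v

noncomputable def eigenvec (v : Word) : ℂ :=
  if v = [] then 1
  else forcedVal T U lam (fun w => if w.length < v.length then eigenvec w else 0) v
termination_by v.length

variable {T U lam}

theorem bushSol_congr {f g : Word → ℂ} {b w : Word} (h : ∀ a, a <+: b → a ≠ b → f a = g a) :
    bushSol T U lam f b w = bushSol T U lam g b w := by
  unfold bushSol
  split_ifs
  · congr 2
    funext i
    refine Finset.sum_congr rfl fun a ha => ?_
    rw [Finset.mem_erase, List.mem_toFinset, List.mem_inits] at ha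
    rw [h a ha.2 ha.1]
  · rfl

theorem bushRoot_prefix (v : Word) : bushRoot T v <+: v := by
  unfold bushRoot
  split_ifs
  · exact List.take_prefix _ _
  · exact List.nil_prefix

theorem offPivotVal_congr {f g : Word → ℂ} {v : Word}
    (h : ∀ w : Word, w.length < v.length → f w = g w) :
    offPivotVal T U lam f v = offPivotVal T U lam g v := by
  unfold offPivotVal
  split_ifs
  · rfl
  · exact bushSol_congr fun a ha hne =>
      h a ((length_lt_of_prefix ha hne).trans_le (bushRoot_prefix v).length_le)

theorem forcedVal_congr {f g : Word → ℂ} {v : Word} (hv : v ≠ [])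
    (h : ∀ w : Word, w.length < v.length → f w = g w) :
    forcedVal T U lam f v = forcedVal T U lam g v := by
  have hpar : (par v).length < v.length := by
    rw [par, List.length_dropLast]
    have := List.length_pos_iff.2 hv
    omega
  unfold forcedVal pivotVal
  split_ifs
  · rw [h _ hpar]
    congr 2
    · congr 1
      refine Finset.sum_congr rfl fun a ha => ?_
      rw [List.mem_toFinset, List.mem_inits] at ha
      rw [h a (ha.length_le.trans_lt hpar)]
    · refine Finset.sum_congr rfl fun c hc => ?_
      have hc := length_of_mem_children (mem_of_mem_finsetOf (Finset.mem_of_mem_erase hc))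
      rw [offPivotVal_congr fun w hw => h w (by omega)]
  · exact offPivotVal_congr h

theorem eigenvec_nil : eigenvec T U lam [] = 1 := by
  rw [eigenvec, if_pos rfl]

theorem eigenvec_eq_forcedVal {v : Word} (hv : v ≠ []) :
    eigenvec T U lam v = forcedVal T U lam (eigenvec T U lam) v := by
  rw [eigenvec, if_neg hv]
  exact forcedVal_congr hv fun w hw => if_pos hw

end Construction

section Eigenvector

variable {T : Set Word} {U : Word → Word → ℝ} {lam : ℂ} {L : Word → ℂ} {u : Word}

theorem bushRoot_spec {v : Word} (hv : v ∉ Ptree T) :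
    bushRoot T v <+: v ∧ bushRoot T v ∉ Ptree T ∧
      ∀ a, a <+: bushRoot T v → a ≠ bushRoot T v → a ∈ Ptree T := by
  have hex : ∃ k, v.take k ∉ Ptree T := ⟨v.length, by rwa [List.take_length]⟩
  rw [bushRoot, dif_pos hex]
  refine ⟨List.take_prefix _ _, Nat.find_spec hex, fun a ha hne => ?_⟩
  have hlen := (length_lt_of_prefix ha hne).trans_le (List.length_take_le _ _)
  rw [List.prefix_iff_eq_take.1 (ha.trans (List.take_prefix _ _))]
  exact not_not.1 (Nat.find_min hex hlen)

theorem bushRoot_eq {b w : Word} (hb : b ∉ Ptree T)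
    (hmin : ∀ a, a <+: b → a ≠ b → a ∈ Ptree T) (hbw : b <+: w) (hw : w ∉ Ptree T) :
    bushRoot T w = b := by
  obtain ⟨hroot, hrootP, hrootmin⟩ := bushRoot_spec hw
  by_contra hne
  rcases List.prefix_or_prefix_of_prefix hroot hbw with h | h
  · exact hrootP (hmin _ h hne)
  · exact hb (hrootmin _ h (Ne.symm hne))

theorem pivot_spec (hT : IsTree T) (hu : u ∈ Ptree T) :
    pivot T u ∈ children T u ∧ pivot T u ∈ Ptree T := by
  have h := exists_mem_children_mem_Ptree hT hu
  rw [pivot, dif_pos h]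
  exact h.choose_spec

theorem vecMul_eq_sum (hU0 : ∀ u ∈ T, ∀ v ∈ T, 0 ≤ U u v) (hA : IsAUD T U) (hu : u ∈ T)
    (L : Word → ℂ) (s : Finset Word) (hs : ∀ v ∈ s, v ∈ T)
    (hcover : ∀ v ∈ T, v <+: u ∨ v ∈ children T u → v ∈ s) :
    ∑' v : T, L v * (U v u : ℂ) = ∑ v ∈ s, L v * U v u := by
  refine tsum_subtype_eq_sum (F := fun v => L v * (U v u : ℂ)) s hs fun v hv hvs => ?_
  by_contra hne
  refine hvs (hcover v hv (prefix_or_mem_children_of_ne_zero hU0 hA hv hu fun h => ?_))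
  simp [h] at hne

theorem eq_pivotVal (hT : IsTree T) (hL : ∀ v ≠ [], L v = forcedVal T U lam L v)
    (hu : u ∈ Ptree T) : L (pivot T u) = pivotVal T U lam L u := by
  obtain ⟨hqc, hqP⟩ := pivot_spec hT hu
  rw [hL _ (ne_nil_of_mem_children hqc), forcedVal, par_of_mem_children hqc, if_pos ⟨hqP, rfl⟩]

theorem eq_offPivotVal (hL : ∀ v ≠ [], L v = forcedVal T U lam L v) {c : Word}
    (hc : c ∈ children T u) (hcq : c ≠ pivot T u) : L c = offPivotVal T U lam L c := by
  rw [hL c (ne_nil_of_mem_children hc), forcedVal, par_of_mem_children hc, if_neg fun h => hcq h.2]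

theorem vecMul_eq_of_mem_Ptree (hT : IsTree T) (hU0 : ∀ u ∈ T, ∀ v ∈ T, 0 ≤ U u v)
    (hA : IsAUD T U) (hI : IrreducibleOn T U) (hL : ∀ v ≠ [], L v = forcedVal T U lam L v)
    (hu : u ∈ Ptree T) :
    ∑' v : T, L v * (U v u : ℂ) = lam * L u := by
  obtain ⟨hqc, -⟩ := pivot_spec hT hu
  have hUq : (U (pivot T u) u : ℂ) ≠ 0 := by
    have := apply_par_pos hA hI hT.1 hqc.1 (ne_nil_of_mem_children hqc)
    rw [par_of_mem_children hqc] at this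
    exact_mod_cast this.ne'
  have hcfin := children_finite hT hu.1
  set C := finsetOf (children T u)
  have hLC : ∑ c ∈ C.erase (pivot T u), L c * U c u =
      ∑ c ∈ C.erase (pivot T u), offPivotVal T U lam L c * U c u :=
    Finset.sum_congr rfl fun c hc => by
      rw [eq_offPivotVal hL ((mem_finsetOf hcfin).1 (Finset.mem_of_mem_erase hc))
        (Finset.ne_of_mem_erase hc)]
  have hdisj : Disjoint u.inits.toFinset C := by
    refine Finset.disjoint_left.2 fun a ha haC => ?_
    rw [List.mem_toFinset, List.mem_inits] at ha
    have := length_of_mem_children ((mem_finsetOf hcfin).1 haC)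
    have := ha.length_le
    omega
  rw [vecMul_eq_sum hU0 hA hu.1 L (u.inits.toFinset ∪ C), Finset.sum_union hdisj,
    ← Finset.add_sum_erase C _ ((mem_finsetOf hcfin).2 hqc), eq_pivotVal hT hL hu, hLC,
    pivotVal, div_mul_cancel₀ _ hUq]
  · ring
  · intro v hv
    rcases Finset.mem_union.1 hv with hv | hv
    · rw [List.mem_toFinset, List.mem_inits] at hv
      exact hT.2.1 u hu.1 v hv
    · exact ((mem_finsetOf hcfin).1 hv).1
  · rintro v - (hv | hv)
    · exact Finset.mem_union_left _ (by rwa [List.mem_toFinset, List.mem_inits])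
    · exact Finset.mem_union_right _ ((mem_finsetOf hcfin).2 hv)

theorem eq_bushSol_of_mem_desc (hT : IsTree T) (hinf : T.Infinite)
    (hL : ∀ v ≠ [], L v = forcedVal T U lam L v) {b w : Word} (hb : b ∉ Ptree T)
    (hbmin : ∀ a, a <+: b → a ≠ b → a ∈ Ptree T) (hfin : (desc T b).Finite)
    (hw : w ∈ desc T b) : L w = bushSol T U lam L b w := by
  have hwP : w ∉ Ptree T := fun h => h.2 (hfin.subset fun z hz => ⟨hz.1, hw.2.trans hz.2⟩)
  have hw0 : w ≠ [] := by
    rintro rfl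
    exact hwP (nil_mem_Ptree hT hinf)
  rw [hL w hw0, forcedVal, if_neg fun h => hwP h.1, offPivotVal, if_neg hwP,
    bushRoot_eq hb hbmin hw.2 hwP]

theorem vecMul_eq_of_not_mem_Ptree (hT : IsTree T) (hinf : T.Infinite)
    (hU0 : ∀ u ∈ T, ∀ v ∈ T, 0 ≤ U u v) (hA : IsAUD T U)
    (hlam : ∀ S, ¬ (transposedBlock U S).charpoly.IsRoot lam)
    (hL : ∀ v ≠ [], L v = forcedVal T U lam L v) (hu : u ∈ T) (huP : u ∉ Ptree T) :
    ∑' v : T, L v * (U v u : ℂ) = lam * L u := by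
  obtain ⟨hbu, hbP, hbmin⟩ := bushRoot_spec huP
  set b := bushRoot T u
  have hfin : (desc T b).Finite := Set.not_infinite.1 fun h => hbP ⟨hT.2.1 u hu b hbu, h⟩
  set S := finsetOf (desc T b)
  set anc : Finset Word := b.inits.toFinset.erase b
  have hmem_anc : ∀ a, a ∈ anc ↔ a <+: b ∧ a ≠ b := by
    simp [anc, List.mem_inits, and_comm]
  set x := (scalar S lam - transposedBlock U S)⁻¹ *ᵥ fun i => ∑ a ∈ anc, L a * U a i
  have hLx : ∀ w (hw : w ∈ S), L w = x ⟨w, hw⟩ := fun w hw => by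
    rw [eq_bushSol_of_mem_desc hT hinf hL hbP hbmin hfin ((mem_finsetOf hfin).1 hw), bushSol,
      dif_pos hw]
  have huS : u ∈ S := (mem_finsetOf hfin).2 ⟨hu, hbu⟩
  have hdisj : Disjoint anc S := by
    refine Finset.disjoint_left.2 fun a ha haS => ?_
    obtain ⟨hab, hne⟩ := (hmem_anc a).1 ha
    exact hne (hab.eq_of_length (hab.length_le.antisymm ((mem_finsetOf hfin).1 haS).2.length_le))
  have hsolve : lam * x ⟨u, huS⟩ - ∑ j, transposedBlock U S ⟨u, huS⟩ j * x j =
      ∑ a ∈ anc, L a * U a u :=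
    scalar_sub_mulVec_inv_mulVec (hlam S) _ _
  have hbush : ∑ w ∈ S, L w * U w u = ∑ j, transposedBlock U S ⟨u, huS⟩ j * x j := by
    rw [← Finset.sum_coe_sort S]
    refine Finset.sum_congr rfl fun j _ => ?_
    rw [hLx j j.2, mul_comm]
    rfl
  rw [vecMul_eq_sum hU0 hA hu L (anc ∪ S), Finset.sum_union hdisj, hbush, hLx u huS]
  · linear_combination -hsolve
  · intro v hv
    rcases Finset.mem_union.1 hv with hv | hv
    · exact hT.2.1 u hu v (((hmem_anc v).1 hv).1.trans hbu)
    · exact ((mem_finsetOf hfin).1 hv).1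
  · intro v hv hvu
    rcases prefix_ne_or_mem_desc hbu hv hvu with h | h
    · exact Finset.mem_union_left _ ((hmem_anc v).2 h)
    · exact Finset.mem_union_right _ ((mem_finsetOf hfin).2 h)

theorem isLeftEigenvector_eigenvec (hT : IsTree T) (hinf : T.Infinite)
    (hU0 : ∀ u ∈ T, ∀ v ∈ T, 0 ≤ U u v) (hA : IsAUD T U) (hI : IrreducibleOn T U)
    (hlam : ∀ S, ¬ (transposedBlock U S).charpoly.IsRoot lam) (hu : u ∈ T) :
    ∑' v : T, eigenvec T U lam v * (U v u : ℂ) = lam * eigenvec T U lam u := by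
  have hL : ∀ v ≠ [], eigenvec T U lam v = forcedVal T U lam (eigenvec T U lam) v :=
    fun _ => eigenvec_eq_forcedVal
  by_cases huP : u ∈ Ptree T
  · exact vecMul_eq_of_mem_Ptree hT hU0 hA hI hL huP
  · exact vecMul_eq_of_not_mem_Ptree hT hinf hU0 hA hlam hL hu huP

end Eigenvector

end TreeEigen

theorem non_eigenvalues_countable (T : Set Word) (hT : IsTree T) (hinf : T.Infinite)
    (U : Word → Word → ℝ) (hM : IsTransMatrix T U) (hA : IsAUD T U)
    (hI : IrreducibleOn T U) :
    {lam : ℂ | ¬ ∃ L : Word → ℂ, (∃ u ∈ T, L u ≠ 0) ∧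
      ∀ u ∈ T, (∑' v : T, L (v : Word) * (U (v : Word) u : ℂ)) = lam * L u}.Countable := by
  refine (TreeEigen.countable_setOf_exists_isRoot_charpoly (TreeEigen.transposedBlock U)).mono
    fun lam hlam => ?_
  by_contra hregular
  refine hlam ⟨TreeEigen.eigenvec T U lam, ⟨[], hT.1, by simp [TreeEigen.eigenvec_nil]⟩,
    fun u hu => ?_⟩
  exact TreeEigen.isLeftEigenvector_eigenvec hT hinf hM.1 hA hI
    (fun S hS => hregular ⟨S, hS⟩) hu
end
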